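/- Consider the bilevel problem min_{x,y} {−x − y | −x + y ≤ 1, y ∈ S(x)} where S(x) = argmin_y {xy² | y ∈ [−1,1]}. The point (x̄, ȳ) = (0, 1) is a strict local minimizer: there is a neighborhood U of (0,1) such that −x − y > −0 − 1 for all (x,y) ∈ U \ {(0,1)} with −x + y ≤ 1 and y ∈ S(x). -/
import Mathlib


open Filter Topology

/-- The solution map of `min_y { x*y² : y ∈ [-1,1] }`. -/
def lowerLevelSol (x : ℝ) : Set ℝ :=
  {y ∈ Set.Icc (-1 : ℝ) 1 | ∀ z ∈ Set.Icc (-1 : ℝ) 1, x * y ^ 2 ≤ x * z ^ 2}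

theorem strict_local_min_bilevel_nonunique_example :
    ∃ U ∈ 𝓝 ((0, 1) : ℝ × ℝ), ∀ p ∈ U, -p.1 + p.2 ≤ 1 → p.2 ∈ lowerLevelSol p.1 →
      p ≠ (0, 1) → -(0 : ℝ) - 1 < -p.1 - p.2 := by
  refine ⟨Set.univ ×ˢ Set.Ioi (1/2 : ℝ), ?_, ?_⟩
  · exact prod_mem_nhds Filter.univ_mem (Ioi_mem_nhds (by norm_num))
  · rintro ⟨x, y⟩ ⟨-, hy⟩ hcon ⟨⟨hy1, hy2⟩, hmin⟩ hne
    simp only [Set.mem_Ioi] at hy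
    dsimp only at hcon hmin hy1 hy2 ⊢
    rcases lt_trichotomy x 0 with hx | hx | hx
    · -- x < 0 : minimizers satisfy y² ≥ 1, so y = 1, contradicting constraint
      have h1 := hmin 1 (by norm_num)
      have hy2' : (1:ℝ) ≤ y ^ 2 := by nlinarith
      have : y = 1 := by nlinarith
      subst this
      linarith
    · -- x = 0 : need y < 1
      have : y ≠ 1 := fun h => hne (by simp [hx, h])
      have : y < 1 := lt_of_le_of_ne hy2 this
      simp only [hx]
      linarith
    · -- x > 0 : y = 0, contradiction with y > 1/2
      have h0 := hmin 0 (by norm_num)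
      have hyp : (0:ℝ) < y := by linarith
      nlinarith [mul_pos hx (mul_pos hyp hyp)]
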